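/- arXiv:1603.02220 — 3 statements merged into one kernel-verified Lean document; each statement's English description precedes it below -/
import Mathlib

section
/- Let e ≥ 2, s ∈ ℤ^l, and suppose m₁, m₂ ∈ ℚ^l both avoid the hyperplanes 𝔪_{i,j,N} = {m : s_i − m_i − (s_j − m_j) = N·e} and lie in the same open chamber of the complement (i.e., for every i, j, N, the sign of s_i − m_{1,i} − (s_j − m_{1,j}) − N·e equals the sign of s_i − m_{2,i} − (s_j − m_{2,j}) − N·e). Then for any two nodes γ = (a,b,c), γ' = (a',b',c') with the same residue mod e, one has b−a+m_{1,c} < b'−a'+m_{1,c'} if and only if b−a+m_{2,c} < b'−a'+m_{2,c'}. -/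
/-! If `d + s c ≡ d' + s c' [ZMOD e]`, say `d' + s c' - (d + s c) = K * e`, then
`(d' + m c') - (d + m c) = s c - m c - (s c' - m c') - N * e` with `N = -K`: the gap between the two
nodes in the order `≼_m` is the affine form cutting out the wall `𝔪_{c,c',N}`. Its sign is thus
constant on a chamber, and independent of `m` when `c = c'`. -/

section Chamber

variable {ι : Type*} (s : ι → ℤ)

theorem sub_eq_wallForm_of_sub_eq_mul (m : ι → ℚ) {e d d' K : ℤ} (c c' : ι)
    (h : d' + s c' - (d + s c) = e * K) :
    (d' : ℚ) + m c' - (d + m c) = (s c : ℚ) - m c - ((s c' : ℚ) - m c') - ((-K : ℤ) : ℚ) * e := by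
  have hq : (d' : ℚ) + s c' - (d + s c) = e * K := by exact_mod_cast h
  push_cast
  linarith

theorem lt_iff_lt_of_sameChamber {e : ℤ} (m₁ m₂ : ι → ℚ)
    (hchamber : ∀ (i j : ι) (N : ℤ), i ≠ j →
      (0 < (s i : ℚ) - m₁ i - ((s j : ℚ) - m₁ j) - (N : ℚ) * (e : ℚ) ↔
        0 < (s i : ℚ) - m₂ i - ((s j : ℚ) - m₂ j) - (N : ℚ) * (e : ℚ)))
    {d d' : ℤ} {c c' : ι} (hres : d + s c ≡ d' + s c' [ZMOD e]) :
    (d : ℚ) + m₁ c < d' + m₁ c' ↔ (d : ℚ) + m₂ c < d' + m₂ c' := by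
  obtain ⟨K, hK⟩ := hres.dvd
  rw [← sub_pos (b := (d : ℚ) + m₁ c), ← sub_pos (b := (d : ℚ) + m₂ c),
    sub_eq_wallForm_of_sub_eq_mul s m₁ c c' hK, sub_eq_wallForm_of_sub_eq_mul s m₂ c c' hK]
  by_cases hc : c = c'
  · subst hc
    simp only [sub_self, zero_sub]
  · exact hchamber c c' (-K) hc

end Chamber

theorem stmt1_general (e : ℤ) (l : ℕ) (s : Fin l → ℤ)
    (m₁ m₂ : Fin l → ℚ)
    (hchamber : ∀ (i j : Fin l) (N : ℤ), i ≠ j →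
      (0 < (s i : ℚ) - m₁ i - ((s j : ℚ) - m₁ j) - (N : ℚ) * (e : ℚ) ↔
        0 < (s i : ℚ) - m₂ i - ((s j : ℚ) - m₂ j) - (N : ℚ) * (e : ℚ)))
    (a b : ℕ) (c : Fin l) (a' b' : ℕ) (c' : Fin l)
    (hres : ((b : ℤ) - (a : ℤ) + s c) ≡ ((b' : ℤ) - (a' : ℤ) + s c') [ZMOD e]) :
    ((b : ℚ) - (a : ℚ) + m₁ c < (b' : ℚ) - (a' : ℚ) + m₁ c' ↔
      (b : ℚ) - (a : ℚ) + m₂ c < (b' : ℚ) - (a' : ℚ) + m₂ c') := by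
  exact_mod_cast lt_iff_lt_of_sameChamber s m₁ m₂ hchamber hres

/-- if `m₁` and `m₂` both avoid the hyperplanes `𝔪_{i,j,N}` and lie in the
same open chamber of the complement, then the orders `≼_{m₁}` and `≼_{m₂}` coincide on
pairs of nodes with the same residue mod `e`. -/
theorem stmt1 (e : ℤ) (he : 2 ≤ e) (l : ℕ) (hl : 1 ≤ l) (s : Fin l → ℤ)
    (m₁ m₂ : Fin l → ℚ)
    (havoid₁ : ∀ (i j : Fin l) (N : ℤ), i ≠ j →
      (s i : ℚ) - m₁ i - ((s j : ℚ) - m₁ j) ≠ (N : ℚ) * (e : ℚ))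
    (havoid₂ : ∀ (i j : Fin l) (N : ℤ), i ≠ j →
      (s i : ℚ) - m₂ i - ((s j : ℚ) - m₂ j) ≠ (N : ℚ) * (e : ℚ))
    (hchamber : ∀ (i j : Fin l) (N : ℤ), i ≠ j →
      (0 < (s i : ℚ) - m₁ i - ((s j : ℚ) - m₁ j) - (N : ℚ) * (e : ℚ) ↔
        0 < (s i : ℚ) - m₂ i - ((s j : ℚ) - m₂ j) - (N : ℚ) * (e : ℚ)))
    (a b : ℕ) (c : Fin l) (a' b' : ℕ) (c' : Fin l)
    (ha : 1 ≤ a) (hb : 1 ≤ b) (ha' : 1 ≤ a') (hb' : 1 ≤ b')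
    (hres : ((b : ℤ) - (a : ℤ) + s c) ≡ ((b' : ℤ) - (a' : ℤ) + s c') [ZMOD e]) :
    ((b : ℚ) - (a : ℚ) + m₁ c < (b' : ℚ) - (a' : ℚ) + m₁ c' ↔
      (b : ℚ) - (a : ℚ) + m₂ c < (b' : ℚ) - (a' : ℚ) + m₂ c') :=
  stmt1_general e l s m₁ m₂ hchamber a b c a' b' c' hres
end

section
/- Let e ≥ 2, s ∈ ℤ^l, and n ∈ ℕ. Suppose m₁, m₂ ∈ ℚ^l avoid all hyperplanes 𝔪_{i,j,N} and are separated only by a single wall 𝔪_{i₀,j₀,N₀} with |N₀·e + (s_{j₀} − s_{i₀})| > n (i.e., for all other triples (i,j,N) the signs of s_i − m_{1,i} − (s_j − m_{1,j}) − N·e and s_i − m_{2,i} − (s_j − m_{2,j}) − N·e agree). Then the orders ≼_{m₁} and ≼_{m₂} agree on all same-residue nodes of any l-partition of rank n: if γ = (a,b,c) and γ' = (a',b',c') are nodes of an l-partition of n with b−a+s_c ≡ b'−a'+s_{c'} (mod e), then b−a+m_{1,c} < b'−a'+m_{1,c'} iff b−a+m_{2,c} < b'−a'+m_{2,c'}.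 -/
/-!
Two nodes `(a,b,c)`, `(a',b',c')` in different components of an `l`-partition of rank `n`
have contents differing by at most `n`: component `c` has at least `b + 1` boxes (row `a` is
that long) and component `c'` at least `a' + 1` (rows `0, …, a'` are nonempty), so
`b + a' + 2 ≤ n`, and symmetrically. If the nodes have equal residue, the integer `M` with
`(b - a + s_c) - (b' - a' + s_{c'}) = M e` gives a wall `𝔪_{c,c',M}` with
`|M e + s_{c'} - s_c| ≤ n`, which therefore is not the crossed wall. Comparing the two nodes
under `≼_m` amounts to reading off on which side of `𝔪_{c,c',M}` the point `m` lies, and `m₁`,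
`m₂` lie on the same side of it.
-/

open Finset

section Partition

variable {n : ℕ} {μ : ℕ → ℕ}

lemma row_lt_of_mem (hvanish : ∀ a, n ≤ a → μ a = 0) {a b : ℕ} (hmem : b < μ a) :
    a < n := by
  by_contra h
  simp [hvanish a (not_lt.mp h)] at hmem

lemma col_lt_sum_range (hvanish : ∀ a, n ≤ a → μ a = 0) {a b : ℕ} (hmem : b < μ a) :
    b < ∑ k ∈ range n, μ k :=
  hmem.trans_le <| single_le_sum (fun _ _ ↦ Nat.zero_le _)
    (mem_range.mpr (row_lt_of_mem hvanish hmem))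

lemma row_lt_sum_range (hμ : Antitone μ) (hvanish : ∀ a, n ≤ a → μ a = 0) {a b : ℕ}
    (hmem : b < μ a) : a < ∑ k ∈ range n, μ k := by
  have hrow : ∀ k ∈ range (a + 1), 1 ≤ μ k := fun k hk ↦
    (Nat.zero_lt_of_lt hmem).trans_le (hμ (Nat.lt_succ_iff.mp (mem_range.mp hk)))
  calc a < #(range (a + 1)) • 1 := by simp
    _ ≤ ∑ k ∈ range (a + 1), μ k := card_nsmul_le_sum _ _ _ hrow
    _ ≤ ∑ k ∈ range n, μ k :=
      sum_le_sum_of_subset (range_subset_range.mpr (row_lt_of_mem hvanish hmem))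

end Partition

section MultiPartition

variable {ι : Type*} [Fintype ι] {n : ℕ} {lam : ι → ℕ → ℕ}

lemma col_add_row_add_two_le (hlam : ∀ c, Antitone (lam c))
    (hvanish : ∀ c a, n ≤ a → lam c a = 0)
    (hrank : ∑ c, ∑ a ∈ range n, lam c a = n)
    {a b a' b' : ℕ} {c c' : ι} (hmem : b < lam c a) (hmem' : b' < lam c' a') (hcc : c ≠ c') :
    b + a' + 2 ≤ n := by
  have hcol := col_lt_sum_range (hvanish c) hmem
  have hrow := row_lt_sum_range (hlam c') (hvanish c') hmem'
  have hpair := add_le_sum (f := fun x ↦ ∑ k ∈ range n, lam x k) (fun _ _ ↦ Nat.zero_le _)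
    (mem_univ c) (mem_univ c') hcc
  omega

lemma abs_content_sub_le (hlam : ∀ c, Antitone (lam c))
    (hvanish : ∀ c a, n ≤ a → lam c a = 0)
    (hrank : ∑ c, ∑ a ∈ range n, lam c a = n)
    {a b a' b' : ℕ} {c c' : ι} (hmem : b < lam c a) (hmem' : b' < lam c' a') (hcc : c ≠ c') :
    |((b : ℤ) - a) - ((b' : ℤ) - a')| ≤ n := by
  have h := col_add_row_add_two_le hlam hvanish hrank hmem hmem' hcc
  have h' := col_add_row_add_two_le hlam hvanish hrank hmem' hmem hcc.symm
  rw [abs_le]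
  omega

end MultiPartition

lemma content_add_lt_iff_of_eq_mul {x x' s s' M e : ℤ} {m m' : ℚ}
    (hM : x + s - (x' + s') = e * M) :
    (x : ℚ) + m < x' + m' ↔ 0 < (s : ℚ) - m - ((s' : ℚ) - m') - (M : ℚ) * (e : ℚ) := by
  have hMQ : (x : ℚ) + s - (x' + s') = e * M := by exact_mod_cast hM
  constructor <;> intro h <;> linarith

lemma ne_wall_of_abs_le {ι : Type*} {s : ι → ℤ} {e N₀ d : ℤ} {i₀ j₀ : ι}
    (hfar : d < |N₀ * e + (s j₀ - s i₀)|) {c c' : ι} {M : ℤ}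
    (hM : |M * e + (s c' - s c)| ≤ d) :
    ¬((c, c', M) = (i₀, j₀, N₀) ∨ (c, c', M) = (j₀, i₀, -N₀)) := by
  rintro (h | h) <;> simp only [Prod.mk.injEq] at h <;> obtain ⟨rfl, rfl, rfl⟩ := h
  · exact hM.not_gt hfar
  · rw [← abs_neg] at hM
    ring_nf at hM hfar
    exact hM.not_gt hfar

theorem stmt2_general (e : ℤ) (l : ℕ) (n : ℕ) (s : Fin l → ℤ)
    (m₁ m₂ : Fin l → ℚ)
    (i₀ j₀ : Fin l) (N₀ : ℤ)
    (hfar : (n : ℤ) < |N₀ * e + (s j₀ - s i₀)|)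
    -- `m₁` and `m₂` are separated only by the wall `𝔪_{i₀,j₀,N₀}` : for every other
    -- wall (taking into account `𝔪_{i,j,N} = 𝔪_{j,i,-N}`), the signs agree.
    (hsep : ∀ (i j : Fin l) (N : ℤ), i ≠ j →
      ¬((i, j, N) = (i₀, j₀, N₀) ∨ (i, j, N) = (j₀, i₀, -N₀)) →
      (0 < (s i : ℚ) - m₁ i - ((s j : ℚ) - m₁ j) - (N : ℚ) * (e : ℚ) ↔
        0 < (s i : ℚ) - m₂ i - ((s j : ℚ) - m₂ j) - (N : ℚ) * (e : ℚ)))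
    -- an `l`-partition of rank `n` (0-indexed rows)
    (lam : Fin l → ℕ → ℕ) (hlam : ∀ c, Antitone (lam c))
    (hvanish : ∀ (c : Fin l) (a : ℕ), n ≤ a → lam c a = 0)
    (hrank : (∑ c : Fin l, ∑ a ∈ Finset.range n, lam c a) = n)
    -- two nodes of `lam` with the same residue mod `e`
    (a b : ℕ) (c : Fin l) (a' b' : ℕ) (c' : Fin l)
    (hmem : b < lam c a) (hmem' : b' < lam c' a')
    (hres : ((b : ℤ) - (a : ℤ) + s c) ≡ ((b' : ℤ) - (a' : ℤ) + s c') [ZMOD e]) :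
    ((b : ℚ) - (a : ℚ) + m₁ c < (b' : ℚ) - (a' : ℚ) + m₁ c' ↔
      (b : ℚ) - (a : ℚ) + m₂ c < (b' : ℚ) - (a' : ℚ) + m₂ c') := by
  obtain rfl | hcc := eq_or_ne c c'
  · simp only [add_lt_add_iff_right]
  obtain ⟨M, hM⟩ := hres.symm.dvd
  have hnear : |M * e + (s c' - s c)| ≤ n :=
    calc |M * e + (s c' - s c)| = |((b : ℤ) - a) - ((b' : ℤ) - a')| := by
          congr 1; linear_combination -hM
      _ ≤ n := abs_content_sub_le hlam hvanish hrank hmem hmem' hcc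
  have hside : ∀ m : Fin l → ℚ, ((b : ℚ) - a + m c < (b' : ℚ) - a' + m c' ↔
      0 < (s c : ℚ) - m c - ((s c' : ℚ) - m c') - (M : ℚ) * (e : ℚ)) := fun m ↦ by
    exact_mod_cast content_add_lt_iff_of_eq_mul (m := m c) (m' := m c') hM
  rw [hside m₁, hside m₂]
  exact hsep c c' M hcc (ne_wall_of_abs_le hfar hnear)

/-- if `m₁` and `m₂` avoid all hyperplanes and are separated only by a single
wall `𝔪_{i₀,j₀,N₀}` with `|N₀·e + (s_{j₀} − s_{i₀})| > n`, then the orders `≼_{m₁}` and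
`≼_{m₂}` agree on all same-residue nodes of any `l`-partition of rank `n`. -/
theorem stmt2 (e : ℤ) (he : 2 ≤ e) (l : ℕ) (hl : 1 ≤ l) (n : ℕ) (s : Fin l → ℤ)
    (m₁ m₂ : Fin l → ℚ)
    (havoid₁ : ∀ (i j : Fin l) (N : ℤ), i ≠ j →
      (s i : ℚ) - m₁ i - ((s j : ℚ) - m₁ j) ≠ (N : ℚ) * (e : ℚ))
    (havoid₂ : ∀ (i j : Fin l) (N : ℤ), i ≠ j →
      (s i : ℚ) - m₂ i - ((s j : ℚ) - m₂ j) ≠ (N : ℚ) * (e : ℚ))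
    (i₀ j₀ : Fin l) (N₀ : ℤ) (hi₀j₀ : i₀ ≠ j₀)
    (hfar : (n : ℤ) < |N₀ * e + (s j₀ - s i₀)|)
    -- `m₁` and `m₂` are separated only by the wall `𝔪_{i₀,j₀,N₀}` : for every other
    -- wall (taking into account `𝔪_{i,j,N} = 𝔪_{j,i,-N}`), the signs agree.
    (hsep : ∀ (i j : Fin l) (N : ℤ), i ≠ j →
      ¬((i, j, N) = (i₀, j₀, N₀) ∨ (i, j, N) = (j₀, i₀, -N₀)) →
      (0 < (s i : ℚ) - m₁ i - ((s j : ℚ) - m₁ j) - (N : ℚ) * (e : ℚ) ↔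
        0 < (s i : ℚ) - m₂ i - ((s j : ℚ) - m₂ j) - (N : ℚ) * (e : ℚ)))
    -- an `l`-partition of rank `n` (0-indexed rows)
    (lam : Fin l → ℕ → ℕ) (hlam : ∀ c, Antitone (lam c))
    (hvanish : ∀ (c : Fin l) (a : ℕ), n ≤ a → lam c a = 0)
    (hrank : (∑ c : Fin l, ∑ a ∈ Finset.range n, lam c a) = n)
    -- two nodes of `lam` with the same residue mod `e`
    (a b : ℕ) (c : Fin l) (a' b' : ℕ) (c' : Fin l)
    (hmem : b < lam c a) (hmem' : b' < lam c' a')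
    (hres : ((b : ℤ) - (a : ℤ) + s c) ≡ ((b' : ℤ) - (a' : ℤ) + s c') [ZMOD e]) :
    ((b : ℚ) - (a : ℚ) + m₁ c < (b' : ℚ) - (a' : ℚ) + m₁ c' ↔
      (b : ℚ) - (a : ℚ) + m₂ c < (b' : ℚ) - (a' : ℚ) + m₂ c') :=
  stmt2_general e l n s m₁ m₂ i₀ j₀ N₀ hfar hsep lam hlam hvanish hrank a b c a' b' c' hmem hmem'
    hres
end

section
/- Let s₁, s₂ ∈ ℤ and let (λ¹, λ²) be a bipartition of n. The map (λ¹,λ²) ↦ (λ̃¹,λ̃²) defined via symbols (for s₂ ≥ s₁: form the two-row symbol S(λ¹,λ²) with rows L₁ = (s₂−d+λ¹_{d+1+s₁−s₂}, …, s₁+λ¹₁) and L₂ = (s₂−d+λ²_{d+1}, …, s₂+λ²₁) where d ≥ |s₁−s₂| is minimal with λ¹_{d+1−|s₁−s₂|} = λ²_{d+1−|s₁−s₂|} = 0; then iteratively, taking x₁ = min L₁, matching it to y₁ = max{z ∈ L₂ : z ≤ x₁} if min L₂ ≤ x₁ and y₁ = max L₂ otherwise, and repeating on L₁∖{x₁},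 L₂∖{y₁}; finally letting L̃₁ be the reordering of {y₁,…} and L̃₂ the reordering of (L₂ ∖ {y₁,…}) ∪ L₁) preserves the rank: |λ̃¹| + |λ̃²| = |λ¹| + |λ²| = n. -/
/-! A finite set `S ⊆ ℤ` is a row `symbolRow p base #S` of a partition `p` exactly when
`#{z ∈ S | z < base + m} ≤ m` for all `m`, and then `∑ p = ∑ S - #S * base - ∑_{k < #S} k`.
This property passes to subsets, hence to the matched set `Ỹ ⊆ L₂`. For `(L₂ ∖ Ỹ) ∪ L₁` and
`c = base + m`, let `r` be its least entry from `L₂ ∖ Ỹ` below `c`: the matching sends every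
entry of `L₁` in `(r, c)` to an entry of `Ỹ` in `(r, c)`, so `(L₂ ∖ Ỹ) ∪ L₁` has at most
`c - r` entries in `[r, c)`, while its entries below `r` lie in `L₁`, which has at most
`r - base` of them. Finally `L₁ ∩ L₂ ⊆ Ỹ`, so the new rows have the old lengths and the old
total sum, hence the same rank. -/

/-- The row of the symbol of a partition `p` (0-indexed, `p i = λ_{i+1}`) with leftmost
entry based at `base` and of length `L`: entries `base + k + λ_{L−k}` for `k = 0,…,L−1`. -/
def symbolRow (p : ℕ → ℕ) (base : ℤ) (L : ℕ) : Finset ℤ :=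
  (Finset.range L).image (fun k : ℕ => base + (k : ℤ) + ((p (L - 1 - k) : ℕ) : ℤ))

/-- The matching procedure: `x₁ = min X` is matched to
`y₁ = max {z ∈ Y : z ≤ x₁}` if such `z` exists, else `y₁ = max Y`; then repeat on
`X ∖ {x₁}`, `Y ∖ {y₁}`. Returns the set `Ỹ = {y₁, y₂, …} ⊆ Y` of matched entries. -/
def matchSet (X Y : Finset ℤ) : Finset ℤ :=
  if hX : X.Nonempty then
    if hY : Y.Nonempty then
      let x := X.min' hX
      let y := if h : (Y.filter (fun z => z ≤ x)).Nonempty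
        then (Y.filter (fun z => z ≤ x)).max' h
        else Y.max' hY
      insert y (matchSet (X.erase x) (Y.erase y))
    else ∅
  else ∅
termination_by X.card
decreasing_by exact Finset.card_erase_lt_of_mem (X.min'_mem hX)

open Finset

def matchPartner (Y : Finset ℤ) (hY : Y.Nonempty) (x : ℤ) : ℤ :=
  if h : {z ∈ Y | z ≤ x}.Nonempty then {z ∈ Y | z ≤ x}.max' h else Y.max' hY

section matching

variable {X Y : Finset ℤ}

lemma matchPartner_mem (hY : Y.Nonempty) (x : ℤ) : matchPartner Y hY x ∈ Y := by
  unfold matchPartner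
  split_ifs with h
  · exact (mem_filter.1 (max'_mem _ h)).1
  · exact max'_mem _ _

lemma le_matchPartner_le (hY : Y.Nonempty) {x w : ℤ} (hw : w ∈ Y) (hwx : w ≤ x) :
    w ≤ matchPartner Y hY x ∧ matchPartner Y hY x ≤ x := by
  have hmem : w ∈ {z ∈ Y | z ≤ x} := mem_filter.2 ⟨hw, hwx⟩
  rw [matchPartner, dif_pos ⟨w, hmem⟩]
  exact ⟨le_max' _ _ hmem, (mem_filter.1 (max'_mem _ ⟨w, hmem⟩)).2⟩

variable (X Y) in
lemma matchSet_subset : matchSet X Y ⊆ Y := by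
  fun_induction matchSet X Y
  case case1 X Y hX hY x y ih =>
    exact insert_subset (matchPartner_mem hY x) (ih.trans (erase_subset _ _))
  all_goals simp

variable (X Y) in
lemma notMem_matchSet_erase (y : ℤ) : y ∉ matchSet X (Y.erase y) :=
  fun h => notMem_erase y Y (matchSet_subset _ _ h)

lemma card_matchSet (h : #X ≤ #Y) : #(matchSet X Y) = #X := by
  fun_induction matchSet X Y
  case case1 X Y hX hY x y ih =>
    have hx : x ∈ X := min'_mem X hX
    have hy : y ∈ Y := matchPartner_mem hY x
    have hy' : y ∉ matchSet (X.erase x) (Y.erase y) := notMem_matchSet_erase _ _ y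
    have hX₀ := hX.card_pos
    rw [card_insert_of_notMem hy', ih (by rw [card_erase_of_mem hx, card_erase_of_mem hy]; omega),
      card_erase_of_mem hx]
    omega
  case case2 X Y hX hY =>
    have := hX.card_pos
    rw [not_nonempty_iff_eq_empty.1 hY, card_empty] at h
    omega
  case case3 X Y hX => simp [not_nonempty_iff_eq_empty.1 hX]

variable (X Y) in
lemma inter_subset_matchSet : X ∩ Y ⊆ matchSet X Y := by
  fun_induction matchSet X Y
  case case1 X Y hX hY x y ih =>
    intro w hw
    obtain ⟨hwX, hwY⟩ := mem_inter.1 hw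
    by_cases hwy : w = y
    · exact hwy ▸ mem_insert_self _ _
    have hwx : w ≠ x := by
      rintro rfl
      obtain ⟨h₁, h₂⟩ : x ≤ y ∧ y ≤ x := le_matchPartner_le hY hwY le_rfl
      exact hwy (le_antisymm h₁ h₂)
    exact mem_insert_of_mem (ih (mem_inter.2 ⟨mem_erase.2 ⟨hwx, hwX⟩, mem_erase.2 ⟨hwy, hwY⟩⟩))
  case case2 X Y hX hY => simp [not_nonempty_iff_eq_empty.1 hY]
  case case3 X Y hX => simp [not_nonempty_iff_eq_empty.1 hX]

/-- If `r ∈ Y` stays unmatched, each `x ∈ X` with `r < x` is matched to some `y` with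
`r < y ≤ x`. -/
lemma card_inter_Ioo_le_matchSet {r : ℤ} (hr : r ∈ Y) (hrT : r ∉ matchSet X Y) (c : ℤ) :
    #(X ∩ Ioo r c) ≤ #(matchSet X Y ∩ Ioo r c) := by
  fun_induction matchSet X Y
  case case1 X Y hX hY x y ih =>
    have hry : r ≠ y := fun h => hrT (h ▸ mem_insert_self _ _)
    have ih := ih (mem_erase.2 ⟨hry, hr⟩) (fun h => hrT (mem_insert_of_mem h))
    by_cases hxI : x ∈ Ioo r c
    · have hx : x ∈ X := min'_mem X hX
      obtain ⟨hrx, hxc⟩ := mem_Ioo.1 hxI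
      obtain ⟨hry', hyx⟩ : r ≤ y ∧ y ≤ x := le_matchPartner_le hY hr hrx.le
      have hyI : y ∈ Ioo r c := mem_Ioo.2 ⟨lt_of_le_of_ne hry' hry, hyx.trans_lt hxc⟩
      have hy' : y ∉ matchSet (X.erase x) (Y.erase y) := notMem_matchSet_erase _ _ y
      rw [insert_inter_of_mem hyI, card_insert_of_notMem (fun h => hy' (mem_inter.1 h).1),
        ← card_erase_add_one (mem_inter.2 ⟨hx, hxI⟩), ← erase_inter]
      omega
    · rw [← erase_eq_of_notMem (fun h => hxI (mem_inter.1 h).2), ← erase_inter]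
      exact ih.trans (card_le_card (inter_subset_inter (subset_insert _ _) Subset.rfl))
  case case2 X Y hX hY => exact absurd ⟨r, hr⟩ hY
  case case3 X Y hX => simp [not_nonempty_iff_eq_empty.1 hX]

lemma card_sdiff_matchSet_union_inter_Ioo_le {r : ℤ} (hr : r ∈ Y) (hrT : r ∉ matchSet X Y)
    (c : ℤ) : #((Y \ matchSet X Y ∪ X) ∩ Ioo r c) ≤ #(Ioo r c) :=
  calc #((Y \ matchSet X Y ∪ X) ∩ Ioo r c)
      ≤ #((Y \ matchSet X Y) ∩ Ioo r c) + #(X ∩ Ioo r c) := by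
        rw [union_inter_distrib_right]; exact card_union_le _ _
    _ ≤ #((Y \ matchSet X Y) ∩ Ioo r c) + #(matchSet X Y ∩ Ioo r c) :=
        Nat.add_le_add_left (card_inter_Ioo_le_matchSet hr hrT c) _
    _ = #(Y ∩ Ioo r c) := by
        rw [← card_union_of_disjoint (disjoint_sdiff_self_left.mono inter_subset_left
          inter_subset_left), ← union_inter_distrib_right, sdiff_union_of_subset
          (matchSet_subset X Y)]
    _ ≤ #(Ioo r c) := card_le_card inter_subset_right

variable (X Y) in
lemma disjoint_sdiff_matchSet : Disjoint (Y \ matchSet X Y) X :=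
  disjoint_left.2 fun _ hz hzX =>
    (mem_sdiff.1 hz).2 (inter_subset_matchSet X Y (mem_inter.2 ⟨hzX, (mem_sdiff.1 hz).1⟩))

lemma card_sdiff_matchSet_union (h : #X ≤ #Y) : #(Y \ matchSet X Y ∪ X) = #Y := by
  rw [card_union_of_disjoint (disjoint_sdiff_matchSet X Y),
    card_sdiff_of_subset (matchSet_subset X Y), card_matchSet h]
  have := card_le_card (matchSet_subset X Y)
  omega

lemma sum_matchSet_add_sum_sdiff_union {M : Type*} [AddCommMonoid M] (f : ℤ → M) :
    ∑ z ∈ matchSet X Y, f z + ∑ z ∈ Y \ matchSet X Y ∪ X, f z = ∑ z ∈ X, f z + ∑ z ∈ Y, f z := by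
  rw [sum_union (disjoint_sdiff_matchSet X Y), ← sum_sdiff (matchSet_subset X Y) (f := f)]
  abel

end matching

lemma strictMono_symbolRow_entry {p : ℕ → ℕ} (hp : Antitone p) (base : ℤ) (L : ℕ) :
    StrictMono fun k : ℕ => base + (k : ℤ) + (p (L - 1 - k) : ℤ) := by
  intro k k' hkk'
  have : p (L - 1 - k) ≤ p (L - 1 - k') := hp (by omega)
  dsimp only
  omega

lemma card_symbolRow {p : ℕ → ℕ} (hp : Antitone p) (base : ℤ) (L : ℕ) :
    #(symbolRow p base L) = L := by
  rw [symbolRow, card_image_of_injective _ (strictMono_symbolRow_entry hp base L).injective,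
    card_range]

lemma sum_symbolRow {p : ℕ → ℕ} (hp : Antitone p) (base : ℤ) (L : ℕ) :
    ∑ z ∈ symbolRow p base L, z =
      L * base + ∑ k ∈ range L, (k : ℤ) + ∑ i ∈ range L, (p i : ℤ) := by
  rw [symbolRow, sum_image fun _ _ _ _ h => (strictMono_symbolRow_entry hp base L).injective h,
    sum_add_distrib, sum_add_distrib, sum_const, card_range, nsmul_eq_mul,
    sum_range_reflect (fun i => (p i : ℤ)) L]

lemma sum_add_sum_eq_of_sum_symbolRow_eq {p q p' q' : ℕ → ℕ} (hp : Antitone p)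
    (hq : Antitone q) (hp' : Antitone p') (hq' : Antitone q') {base : ℤ} {L₁ L₂ : ℕ}
    (h : ∑ z ∈ symbolRow p' base L₁, z + ∑ z ∈ symbolRow q' base L₂, z =
      ∑ z ∈ symbolRow p base L₁, z + ∑ z ∈ symbolRow q base L₂, z) :
    ∑ i ∈ range L₁, p' i + ∑ i ∈ range L₂, q' i = ∑ i ∈ range L₁, p i + ∑ i ∈ range L₂, q i := by
  rw [sum_symbolRow hp, sum_symbolRow hq, sum_symbolRow hp', sum_symbolRow hq'] at h
  zify
  linarith

lemma sum_range_eq_of_forall_ge {M : Type*} [AddCommMonoid M] (f : ℕ → M) {L N : ℕ}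
    (hLN : L ≤ N) (hf : ∀ i, L ≤ i → f i = 0) : ∑ i ∈ range N, f i = ∑ i ∈ range L, f i := by
  rw [← sum_range_add_sum_Ico f hLN, sum_eq_zero fun i hi => hf i (mem_Ico.1 hi).1, add_zero]

/-- Equivalently, the `k`-th smallest element of `S` is at least `base + k`. -/
def IsBetaSet (base : ℤ) (S : Finset ℤ) : Prop :=
  ∀ m : ℕ, #{z ∈ S | z < base + m} ≤ m

lemma isBetaSet_symbolRow (p : ℕ → ℕ) (base : ℤ) (L : ℕ) :
    IsBetaSet base (symbolRow p base L) := by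
  intro m
  have hsub : {z ∈ symbolRow p base L | z < base + m} ⊆
      (range m).image fun k : ℕ => base + (k : ℤ) + (p (L - 1 - k) : ℤ) := by
    intro z hz
    obtain ⟨hz, hzm⟩ := mem_filter.1 hz
    obtain ⟨k, -, rfl⟩ := mem_image.1 hz
    exact mem_image.2 ⟨k, mem_range.2 (by omega), rfl⟩
  exact (card_le_card hsub).trans (card_image_le.trans (card_range m).le)

namespace IsBetaSet

variable {base : ℤ} {S T : Finset ℤ}

lemma mono (hT : IsBetaSet base T) (hST : S ⊆ T) : IsBetaSet base S :=
  fun m => (card_le_card (filter_subset_filter _ hST)).trans (hT m)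

lemma le_of_mem (hS : IsBetaSet base S) {z : ℤ} (hz : z ∈ S) : base ≤ z := by
  by_contra! hlt
  have := hS 0
  rw [Nat.le_zero, card_eq_zero, filter_eq_empty_iff] at this
  exact this hz (by simpa using hlt)

lemma add_le_orderEmbOfFin (hS : IsBetaSet base S) (k : Fin #S) :
    base + k ≤ S.orderEmbOfFin rfl k := by
  by_contra! hlt
  have hsub : (Iic k).map (S.orderEmbOfFin rfl).toEmbedding ⊆ {z ∈ S | z < base + k} := by
    intro z hz
    obtain ⟨j, hj, rfl⟩ := mem_map.1 hz
    exact mem_filter.2 ⟨orderEmbOfFin_mem S rfl j,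
      ((S.orderEmbOfFin rfl).monotone (mem_Iic.1 hj)).trans_lt hlt⟩
  have := (card_le_card hsub).trans (hS k)
  rw [card_map, Fin.card_Iic] at this
  omega

/-- The entries of `S` in increasing order are `base + k + p (#S - 1 - k)`. -/
lemma exists_symbolRow_eq (hS : IsBetaSet base S) :
    ∃ p : ℕ → ℕ, Antitone p ∧ (∀ i, #S ≤ i → p i = 0) ∧ symbolRow p base #S = S := by
  set L := #S
  set a := S.orderEmbOfFin (rfl : #S = L)
  let p : ℕ → ℕ := fun i =>
    if h : i < L then (a ⟨L - 1 - i, by omega⟩ - base - (L - 1 - i : ℕ)).toNat else 0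
  have hentry : ∀ k (hk : k < L), base + k + (p (L - 1 - k) : ℤ) = a ⟨k, hk⟩ := by
    intro k hk
    have hlow : base + k ≤ a ⟨k, hk⟩ := hS.add_le_orderEmbOfFin ⟨k, hk⟩
    simp only [p, dif_pos (show L - 1 - k < L by omega), show L - 1 - (L - 1 - k) = k by omega]
    omega
  refine ⟨p, antitone_nat_of_succ_le fun i => ?_, fun i hi => dif_neg (by omega), ?_⟩
  · by_cases hi : i + 1 < L
    · have hlt : a ⟨L - 1 - (i + 1), by omega⟩ < a ⟨L - 1 - i, by omega⟩ :=
        a.strictMono (Fin.mk_lt_mk.2 (by omega))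
      simp only [p, dif_pos hi, dif_pos (show i < L by omega)]
      omega
    · simp only [p, dif_neg hi, zero_le]
  · ext z
    simp only [symbolRow, mem_image, mem_range]
    constructor
    · rintro ⟨k, hk, rfl⟩
      exact hentry k hk ▸ orderEmbOfFin_mem S rfl _
    · intro hz
      obtain ⟨⟨k, hk⟩, rfl⟩ : z ∈ Set.range a := (range_orderEmbOfFin S rfl).symm ▸ hz
      exact ⟨k, hk, hentry k hk⟩

lemma sdiff_matchSet_union {X Y : Finset ℤ} (hX : IsBetaSet base X) (hY : IsBetaSet base Y) :
    IsBetaSet base (Y \ matchSet X Y ∪ X) := by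
  intro m
  set c := base + m
  set R := Y \ matchSet X Y
  by_cases hne : {z ∈ R | z < c}.Nonempty
  swap
  · rw [filter_union, not_nonempty_iff_eq_empty.1 hne, empty_union]
    exact hX m
  set r := {z ∈ R | z < c}.min' hne
  obtain ⟨hrR, hrc⟩ := mem_filter.1 (min'_mem _ hne)
  obtain ⟨hrY, hrT⟩ := mem_sdiff.1 hrR
  have hbr : base ≤ r := hY.le_of_mem hrY
  have hsub : {z ∈ R ∪ X | z < c} ⊆ {z ∈ X | z < base + (r - base).toNat} ∪
      insert r ((R ∪ X) ∩ Ioo r c) := by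
    intro z hz
    obtain ⟨hzRX, hzc⟩ := mem_filter.1 hz
    rcases lt_trichotomy z r with hzr | rfl | hrz
    · have hzR : z ∉ R := fun hzR => (min'_le _ z (mem_filter.2 ⟨hzR, hzc⟩)).not_gt hzr
      exact mem_union_left _ (mem_filter.2 ⟨(mem_union.1 hzRX).resolve_left hzR, by omega⟩)
    · exact mem_union_right _ (mem_insert_self _ _)
    · exact mem_union_right _ (mem_insert_of_mem (mem_inter.2 ⟨hzRX, mem_Ioo.2 ⟨hrz, hzc⟩⟩))
  have hmid : #((R ∪ X) ∩ Ioo r c) ≤ (c - r - 1).toNat :=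
    (card_sdiff_matchSet_union_inter_Ioo_le hrY hrT c).trans_eq (Int.card_Ioo r c)
  calc #{z ∈ R ∪ X | z < c}
      ≤ (r - base).toNat + ((c - r - 1).toNat + 1) :=
        (card_le_card hsub).trans ((card_union_le _ _).trans
          (Nat.add_le_add (hX _) ((card_insert_le _ _).trans (Nat.add_le_add_right hmid 1))))
    _ = m := by omega

end IsBetaSet

theorem stmt9_general (s₂ : ℤ) (n : ℕ)
    (p q : ℕ → ℕ) (hp : Antitone p) (hq : Antitone q)
    (t : ℕ)
    (d : ℕ) (hpd : p (d - t) = 0)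
    (hrank : (∑ i ∈ Finset.range (d + 1), p i) + (∑ i ∈ Finset.range (d + 1), q i) = n) :
    ∃ p' q' : ℕ → ℕ, Antitone p' ∧ Antitone q' ∧
      symbolRow p' (s₂ - d) (d + 1 - t) =
        matchSet (symbolRow p (s₂ - d) (d + 1 - t)) (symbolRow q (s₂ - d) (d + 1)) ∧
      symbolRow q' (s₂ - d) (d + 1) =
        ((symbolRow q (s₂ - d) (d + 1)) \
            matchSet (symbolRow p (s₂ - d) (d + 1 - t)) (symbolRow q (s₂ - d) (d + 1))) ∪
          (symbolRow p (s₂ - d) (d + 1 - t)) ∧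
      (∑ i ∈ Finset.range (d + 1), p' i) + (∑ i ∈ Finset.range (d + 1), q' i) = n := by
  set X := symbolRow p (s₂ - d) (d + 1 - t)
  set Y := symbolRow q (s₂ - d) (d + 1)
  have hX : #X = d + 1 - t := card_symbolRow hp _ _
  have hY : #Y = d + 1 := card_symbolRow hq _ _
  have hXY : #X ≤ #Y := by omega
  obtain ⟨p', hp', hp'0, hp'X⟩ :=
    ((isBetaSet_symbolRow q _ _).mono (matchSet_subset X Y)).exists_symbolRow_eq
  obtain ⟨q', hq', -, hq'Y⟩ := ((isBetaSet_symbolRow p _ _).sdiff_matchSet_union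
    (isBetaSet_symbolRow q _ _)).exists_symbolRow_eq
  rw [card_matchSet hXY, hX] at hp'0 hp'X
  rw [card_sdiff_matchSet_union hXY, hY] at hq'Y
  refine ⟨p', q', hp', hq', hp'X, hq'Y, ?_⟩
  have hp0 : ∀ i, d + 1 - t ≤ i → p i = 0 := fun i hi =>
    Nat.eq_zero_of_le_zero (hpd ▸ hp (by omega))
  rw [← hrank, sum_range_eq_of_forall_ge p' (by omega) hp'0,
    sum_range_eq_of_forall_ge p (by omega) hp0]
  refine sum_add_sum_eq_of_sum_symbolRow_eq (base := s₂ - d) hp hq hp' hq' ?_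
  rw [hp'X, hq'Y, sum_matchSet_add_sum_sdiff_union]

/-- the symbol-matching map `(λ¹,λ²) ↦ (λ̃¹,λ̃²)` (for `s₁ ≤ s₂`, with
`t = s₂ − s₁`, rows `L₁ = symbolRow λ¹ (s₂−d) (d+1−t)` and `L₂ = symbolRow λ² (s₂−d) (d+1)`,
`L̃₁ = Ỹ` the matched set and `L̃₂ = (L₂ ∖ Ỹ) ∪ L₁`) preserves the rank:
`|λ̃¹| + |λ̃²| = |λ¹| + |λ²| = n`. -/
theorem stmt9 (s₁ s₂ : ℤ) (hs : s₁ ≤ s₂) (n : ℕ)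
    (p q : ℕ → ℕ) (hp : Antitone p) (hq : Antitone q)
    (t : ℕ) (ht : (t : ℤ) = s₂ - s₁)
    (d : ℕ) (hd : t ≤ d) (hpd : p (d - t) = 0) (hqd : q (d - t) = 0)
    (hrank : (∑ i ∈ Finset.range (d + 1), p i) + (∑ i ∈ Finset.range (d + 1), q i) = n) :
    ∃ p' q' : ℕ → ℕ, Antitone p' ∧ Antitone q' ∧
      symbolRow p' (s₂ - d) (d + 1 - t) =
        matchSet (symbolRow p (s₂ - d) (d + 1 - t)) (symbolRow q (s₂ - d) (d + 1)) ∧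
      symbolRow q' (s₂ - d) (d + 1) =
        ((symbolRow q (s₂ - d) (d + 1)) \
            matchSet (symbolRow p (s₂ - d) (d + 1 - t)) (symbolRow q (s₂ - d) (d + 1))) ∪
          (symbolRow p (s₂ - d) (d + 1 - t)) ∧
      (∑ i ∈ Finset.range (d + 1), p' i) + (∑ i ∈ Finset.range (d + 1), q' i) = n :=
  stmt9_general s₂ n p q hp hq t d hpd hrank
end
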